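/- For every p ∈ V and every alternating bilinear form Y on V, let T_{p,Y} ∈ W be T_{p,Y}(a,b,c) := g(p,a)·Y(b,c). Then, for all b, c ∈ V: (i) C[T_{p,Y}](p,b,c) = 2·q(p)·Y(b,c) − ((n−4)/(n−1))·(K_p Y)(b,c); and (ii) A[T_{p,Y}](p,b,c) = 2·q(p)·Y(b,c) + 2·(K_p Y)(b,c). (These are the principal symbols of the compositions ρ¹∘CYK and ρ²∘d acting on 2-forms, i.e. the second-order columns of the paper's coefficient matrix relating ρ∘(CYK, d) to the basis Q¹, Q², Q³, Q⁴.) -/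
import Mathlib


noncomputable section

/-- The `g`-trace `μ_T` of a trilinear tensor `T` over its first and third slots,
computed with the inverse metric components `ginv`: `μ_T(c) = Σᵢⱼ g^{ij} T(eᵢ, c, eⱼ)`. -/
def muTr (n : ℕ) (ginv : Matrix (Fin n) (Fin n) ℝ)
    (T : Fin n → Fin n → Fin n → ℝ) (c : Fin n) : ℝ :=
  ∑ i, ∑ j, ginv i j * T i c j

/-- The algebraic conformal Killing–Yano projector:
`C[T](a,b,c) = 2T(a,b,c) − T(b,c,a) + T(c,b,a) + (3/(n−1))(g(a,b)μ_T(c) − g(c,a)μ_T(b))`. -/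
def cykOp (n : ℕ) (g ginv : Matrix (Fin n) (Fin n) ℝ)
    (T : Fin n → Fin n → Fin n → ℝ) : Fin n → Fin n → Fin n → ℝ :=
  fun a b c => 2 * T a b c - T b c a + T c b a
    + (3 / ((n : ℝ) - 1)) * (g a b * muTr n ginv T c - g c a * muTr n ginv T b)

/-- The antisymmetrizer `A[T](a,b,c) = 2(T(a,b,c) + T(b,c,a) + T(c,a,b))`. -/
def asymOp (n : ℕ) (T : Fin n → Fin n → Fin n → ℝ) : Fin n → Fin n → Fin n → ℝ :=
  fun a b c => 2 * (T a b c + T b c a + T c a b)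

/-- Lowering the index of `p` with the metric `g`: `p_a = Σᵢ pⁱ g_{ia}`. -/
def lowerIdx (n : ℕ) (g : Matrix (Fin n) (Fin n) ℝ) (p : Fin n → ℝ) (a : Fin n) : ℝ :=
  ∑ i, p i * g i a

/-- The quadratic form `q(p) = g(p,p)`. -/
def qForm (n : ℕ) (g : Matrix (Fin n) (Fin n) ℝ) (p : Fin n → ℝ) : ℝ :=
  ∑ i, ∑ j, p i * g i j * p j

/-- The symbol map `K_p` on 2-forms:
`(K_p Y)(b,c) = g(p,b)·Y(c,p) − g(p,c)·Y(b,p)` in components. -/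
def Ksymb (n : ℕ) (g : Matrix (Fin n) (Fin n) ℝ) (p : Fin n → ℝ)
    (Y : Matrix (Fin n) (Fin n) ℝ) (b c : Fin n) : ℝ :=
  lowerIdx n g p b * (∑ j, Y c j * p j) - lowerIdx n g p c * (∑ j, Y b j * p j)

/-- The tensor `T_{p,Y}(a,b,c) = g(p,a)·Y(b,c)` in components. -/
def Ttens (n : ℕ) (g : Matrix (Fin n) (Fin n) ℝ) (p : Fin n → ℝ)
    (Y : Matrix (Fin n) (Fin n) ℝ) : Fin n → Fin n → Fin n → ℝ :=
  fun a b c => lowerIdx n g p a * Y b c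

/-- Principal symbols of `ρ¹∘CYK` and `ρ²∘d` on a 2-form `Y`:
`C[T_{p,Y}](p,b,c) = 2q(p)Y(b,c) − ((n−4)/(n−1))(K_pY)(b,c)` and
`A[T_{p,Y}](p,b,c) = 2q(p)Y(b,c) + 2(K_pY)(b,c)`. -/
theorem symbol_of_rho_comp (n : ℕ) (hn : 3 ≤ n)
    (g ginv : Matrix (Fin n) (Fin n) ℝ)
    (hsymm : ∀ i j, g i j = g j i)
    (hinv : g * ginv = 1) (hinv' : ginv * g = 1)
    (p : Fin n → ℝ) (Y : Matrix (Fin n) (Fin n) ℝ)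
    (hY : ∀ b c, Y b c = -(Y c b)) (b c : Fin n) :
    (∑ a, p a * cykOp n g ginv (Ttens n g p Y) a b c)
        = 2 * qForm n g p * Y b c
          - (((n : ℝ) - 4)/((n : ℝ) - 1)) * Ksymb n g p Y b c ∧
    (∑ a, p a * asymOp n (Ttens n g p Y) a b c)
        = 2 * qForm n g p * Y b c + 2 * Ksymb n g p Y b c := by

  have hn1 : (n : ℝ) - 1 ≠ 0 := by
    have : (3 : ℝ) ≤ (n : ℝ) := by exact_mod_cast hn
    intro h; nlinarith
  have hinvP : ∀ j, (∑ i, ginv i j * lowerIdx n g p i) = p j := by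
    intro j
    have h1 : ∀ i, ginv i j * lowerIdx n g p i = ∑ k, ginv i j * (p k * g k i) := by
      intro i; simp only [lowerIdx, Finset.mul_sum]
    simp only [h1]
    rw [Finset.sum_comm]
    have h2 : ∀ k, (∑ i, ginv i j * (p k * g k i)) = p k * ((g * ginv) k j) := by
      intro k
      rw [Matrix.mul_apply, Finset.mul_sum]
      exact Finset.sum_congr rfl fun i _ => by ring
    simp only [h2, hinv, Matrix.one_apply]
    simp
  have hmu : ∀ d, muTr n ginv (Ttens n g p Y) d = ∑ j, Y d j * p j := by
    intro d
    simp only [muTr, Ttens]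
    rw [Finset.sum_comm]
    refine Finset.sum_congr rfl fun j _ => ?_
    calc (∑ i, ginv i j * (lowerIdx n g p i * Y d j))
        = (∑ i, ginv i j * lowerIdx n g p i) * Y d j := by
          rw [Finset.sum_mul]; exact Finset.sum_congr rfl fun i _ => by ring
      _ = Y d j * p j := by rw [hinvP]; ring
  have hq : (∑ a, p a * lowerIdx n g p a) = qForm n g p := by
    simp only [lowerIdx, qForm, Finset.mul_sum]
    rw [Finset.sum_comm]
    exact Finset.sum_congr rfl fun i _ => Finset.sum_congr rfl fun a _ => by ring
  have hgb : ∀ d, (∑ a, p a * g a d) = lowerIdx n g p d := fun d => rfl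
  have hgc : ∀ d, (∑ a, p a * g d a) = lowerIdx n g p d := by
    intro d
    rw [← hgb d]
    exact Finset.sum_congr rfl fun a _ => by rw [hsymm d a]
  have hYp : ∀ d, (∑ a, p a * Y d a) = ∑ j, Y d j * p j :=
    fun d => Finset.sum_congr rfl fun a _ => by ring
  have hYrev : ∀ d, (∑ a, p a * Y a d) = -(∑ j, Y d j * p j) := by
    intro d
    rw [← Finset.sum_neg_distrib]
    exact Finset.sum_congr rfl fun a _ => by rw [hY a d]; ring
  constructor
  · calc (∑ a, p a * cykOp n g ginv (Ttens n g p Y) a b c)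
        = ∑ a, (2 * Y b c * (p a * lowerIdx n g p a)
            - lowerIdx n g p b * (p a * Y c a)
            + lowerIdx n g p c * (p a * Y b a)
            + (3 / ((n : ℝ) - 1)) * ((∑ j, Y c j * p j) * (p a * g a b)
              - (∑ j, Y b j * p j) * (p a * g c a))) := by
          refine Finset.sum_congr rfl fun a _ => ?_
          simp only [cykOp, Ttens, hmu]; ring
      _ = 2 * Y b c * (∑ a, p a * lowerIdx n g p a)
            - lowerIdx n g p b * (∑ a, p a * Y c a)
            + lowerIdx n g p c * (∑ a, p a * Y b a)
            + (3 / ((n : ℝ) - 1)) * ((∑ j, Y c j * p j) * (∑ a, p a * g a b)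
              - (∑ j, Y b j * p j) * (∑ a, p a * g c a)) := by
          simp only [Finset.sum_add_distrib, Finset.sum_sub_distrib, ← Finset.mul_sum]
      _ = 2 * qForm n g p * Y b c
            - (((n : ℝ) - 4)/((n : ℝ) - 1)) * Ksymb n g p Y b c := by
          rw [hq, hYp, hYp, hgb, hgc]
          simp only [Ksymb]
          field_simp
          ring
  · calc (∑ a, p a * asymOp n (Ttens n g p Y) a b c)
        = ∑ a, (2 * Y b c * (p a * lowerIdx n g p a)
            + 2 * lowerIdx n g p b * (p a * Y c a)
            + 2 * lowerIdx n g p c * (p a * Y a b)) := by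
          refine Finset.sum_congr rfl fun a _ => ?_
          simp only [asymOp, Ttens]; ring
      _ = 2 * Y b c * (∑ a, p a * lowerIdx n g p a)
            + 2 * lowerIdx n g p b * (∑ a, p a * Y c a)
            + 2 * lowerIdx n g p c * (∑ a, p a * Y a b) := by
          simp only [Finset.sum_add_distrib, ← Finset.mul_sum]
      _ = 2 * qForm n g p * Y b c + 2 * Ksymb n g p Y b c := by
          rw [hq, hYp, hYrev]
          simp only [Ksymb]
          ring
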